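/- arXiv:1304.5390 — 7 statements merged into one kernel-verified Lean document; each statement's English description precedes it below -/
import Mathlib

section
/- The sum over i of the product of binomial coefficients C(a_1, i) * C(a_2, i) * ... * C(a_q, i), subject to a_1 + ... + a_q = n being fixed, is maximized when all a_j are as equal as possible (each equal to ⌈n/q⌉ or ⌊n/q⌋). -/
open Finset

/-- Key smoothing inequality for binomial coefficients. -/
lemma stmt0_aux_smooth (i a c : ℕ) (h : c + 1 ≤ a) :
    a.choose i * c.choose i ≤ (a - 1).choose i * (c + 1).choose i := by
  rcases le_or_gt i c with hic | hic
  · have ha1 : 1 ≤ a := le_trans (Nat.le_add_left 1 c) h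
    have h1 : (a - 1).choose i * a = a.choose i * (a - i) := by
      have := Nat.choose_mul_succ_eq (a - 1) i
      rwa [Nat.sub_add_cancel ha1] at this
    have h2 : c.choose i * (c + 1) = (c + 1).choose i * (c + 1 - i) := Nat.choose_mul_succ_eq c i
    have hpos : 0 < a * (c + 1 - i) := Nat.mul_pos ha1 (by omega)
    have key : a.choose i * c.choose i * (a * (c + 1 - i)) ≤
        (a - 1).choose i * (c + 1).choose i * (a * (c + 1 - i)) := by
      have e1 : (a - 1).choose i * (c + 1).choose i * (a * (c + 1 - i)) =
          (a.choose i * (a - i)) * (c.choose i * (c + 1)) := by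
        calc (a - 1).choose i * (c + 1).choose i * (a * (c + 1 - i))
            = ((a - 1).choose i * a) * ((c + 1).choose i * (c + 1 - i)) := by ring
          _ = (a.choose i * (a - i)) * (c.choose i * (c + 1)) := by rw [h1, ← h2]
      rw [e1]
      have hia : i ≤ a := by omega
      have hstep : a * (c + 1 - i) ≤ (a - i) * (c + 1) := by
        obtain ⟨u, hu⟩ : ∃ u, c + 1 - i = u := ⟨_, rfl⟩
        obtain ⟨v, hv⟩ : ∃ v, a - i = v := ⟨_, rfl⟩
        have hc1 : c + 1 = u + i := by omega
        have ha' : a = v + i := by omega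
        have huv : u ≤ v := by omega
        calc a * (c + 1 - i) = v * u + i * u := by rw [hu, ha']; ring
          _ ≤ v * u + v * i := by
              have : i * u ≤ v * i := by
                calc i * u ≤ i * v := Nat.mul_le_mul_left i huv
                  _ = v * i := Nat.mul_comm i v
              omega
          _ = (a - i) * (c + 1) := by rw [hv, hc1]; ring
      calc a.choose i * c.choose i * (a * (c + 1 - i))
          ≤ a.choose i * c.choose i * ((a - i) * (c + 1)) :=
            Nat.mul_le_mul_left _ hstep
        _ = a.choose i * (a - i) * (c.choose i * (c + 1)) := by ring
    exact Nat.le_of_mul_le_mul_right key hpos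
  · simp [Nat.choose_eq_zero_of_lt hic]

lemma stmt0_aux_prod2 {q : ℕ} (f : ℕ → ℕ) (a : Fin q → ℕ) (j k : Fin q) (hjk : j ≠ k)
    (x y : ℕ) (hf : f (a j) * f (a k) ≤ f x * f y) :
    ∏ t, f (a t) ≤ ∏ t, f (Function.update (Function.update a j x) k y t) := by
  classical
  set c := Function.update (Function.update a j x) k y with hc
  have hck : c k = y := by simp [hc]
  have hcj : c j = x := by simp [hc, Function.update_of_ne hjk]
  have hmemk : k ∈ (Finset.univ : Finset (Fin q)) := Finset.mem_univ k
  have hmemj : j ∈ (Finset.univ : Finset (Fin q)).erase k := by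
    simp [Finset.mem_erase, hjk]
  have hrest : ∀ t ∈ ((Finset.univ : Finset (Fin q)).erase k).erase j, c t = a t := by
    intro t ht
    simp only [Finset.mem_erase] at ht
    simp [hc, Function.update_of_ne ht.2.1, Function.update_of_ne ht.1]
  have expandA : ∏ t, f (a t) =
      f (a k) * (f (a j) * ∏ t ∈ ((Finset.univ : Finset (Fin q)).erase k).erase j, f (a t)) := by
    rw [← Finset.mul_prod_erase _ _ hmemk, ← Finset.mul_prod_erase _ _ hmemj]
  have expandC : ∏ t, f (c t) =
      f y * (f x * ∏ t ∈ ((Finset.univ : Finset (Fin q)).erase k).erase j, f (a t)) := by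
    rw [← Finset.mul_prod_erase _ (fun t => f (c t)) hmemk,
      ← Finset.mul_prod_erase _ (fun t => f (c t)) hmemj, hck, hcj]
    congr 1
    congr 1
    exact Finset.prod_congr rfl (fun t ht => by rw [hrest t ht])
  rw [expandA, expandC, ← mul_assoc, ← mul_assoc]
  apply Nat.mul_le_mul_right
  calc f (a k) * f (a j) = f (a j) * f (a k) := Nat.mul_comm _ _
    _ ≤ f x * f y := hf
    _ = f y * f x := Nat.mul_comm _ _

lemma stmt0_aux_sum2 {q : ℕ} (g : ℕ → ℕ) (a : Fin q → ℕ) (j k : Fin q) (hjk : j ≠ k)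
    (x y : ℕ) :
    ∑ t, g (Function.update (Function.update a j x) k y t) + g (a j) + g (a k) =
      ∑ t, g (a t) + g x + g y := by
  classical
  set c := Function.update (Function.update a j x) k y with hc
  have hck : c k = y := by simp [hc]
  have hcj : c j = x := by simp [hc, Function.update_of_ne hjk]
  have hmemk : k ∈ (Finset.univ : Finset (Fin q)) := Finset.mem_univ k
  have hmemj : j ∈ (Finset.univ : Finset (Fin q)).erase k := by
    simp [Finset.mem_erase, hjk]
  have hrest : ∀ t ∈ ((Finset.univ : Finset (Fin q)).erase k).erase j, c t = a t := by
    intro t ht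
    simp only [Finset.mem_erase] at ht
    simp [hc, Function.update_of_ne ht.2.1, Function.update_of_ne ht.1]
  have expandA : ∑ t, g (a t) =
      g (a k) + (g (a j) + ∑ t ∈ ((Finset.univ : Finset (Fin q)).erase k).erase j, g (a t)) := by
    rw [← Finset.add_sum_erase _ _ hmemk, ← Finset.add_sum_erase _ _ hmemj]
  have expandC : ∑ t, g (c t) =
      g y + (g x + ∑ t ∈ ((Finset.univ : Finset (Fin q)).erase k).erase j, g (a t)) := by
    rw [← Finset.add_sum_erase _ (fun t => g (c t)) hmemk,
      ← Finset.add_sum_erase _ (fun t => g (c t)) hmemj, hck, hcj]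
    congr 2
    exact Finset.sum_congr rfl (fun t ht => by rw [hrest t ht])
  rw [expandA, expandC]
  ring

/-- decomposition of a two-valued vector's product and sum via the count of `y`-entries. -/
lemma stmt0_aux_decomp {q : ℕ} (f : ℕ → ℕ) (x y : ℕ) (c : Fin q → ℕ)
    (h : ∀ j, c j = x ∨ c j = y) (hxy : x ≠ y) :
    ∏ j, f (c j) = f x ^ (q - (Finset.univ.filter (fun j => c j = y)).card) *
      f y ^ (Finset.univ.filter (fun j => c j = y)).card ∧
    ∑ j, c j = x * (q - (Finset.univ.filter (fun j => c j = y)).card) +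
      y * (Finset.univ.filter (fun j => c j = y)).card := by
  classical
  set S := Finset.univ.filter (fun j => c j = y) with hS
  have hcard : Sᶜ.card = q - S.card := by
    have := Finset.card_compl S
    simpa using this
  have hvalS : ∀ j ∈ S, c j = y := fun j hj => (Finset.mem_filter.mp hj).2
  have hvalSc : ∀ j ∈ Sᶜ, c j = x := by
    intro j hj
    have : ¬ (c j = y) := by
      simpa [hS] using (Finset.mem_compl.mp hj)
    rcases h j with h' | h'
    · exact h'
    · exact absurd h' this
  constructor
  · rw [← Finset.prod_compl_mul_prod S (fun j => f (c j))]
    congr 1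
    · rw [Finset.prod_congr rfl (fun j hj => by rw [hvalSc j hj]), Finset.prod_const, hcard]
    · rw [Finset.prod_congr rfl (fun j hj => by rw [hvalS j hj]), Finset.prod_const]
  · rw [← Finset.sum_compl_add_sum S (fun j => c j)]
    congr 1
    · rw [Finset.sum_congr rfl (fun j hj => by rw [hvalSc j hj]), Finset.sum_const, hcard]
      ring
    · rw [Finset.sum_congr rfl (fun j hj => by rw [hvalS j hj]), Finset.sum_const]
      ring

/-- two two-valued vectors with the same sum have the same product. -/
lemma stmt0_aux_prodeq {q : ℕ} (f : ℕ → ℕ) (x y : ℕ) (hxy : x ≤ y) (a b : Fin q → ℕ)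
    (hav : ∀ j, a j = x ∨ a j = y) (hbv : ∀ j, b j = x ∨ b j = y)
    (hsum : ∑ j, a j = ∑ j, b j) :
    ∏ j, f (a j) = ∏ j, f (b j) := by
  classical
  rcases eq_or_lt_of_le hxy with rfl | hlt
  · have ha' : ∀ j, a j = x := fun j => (hav j).elim id id
    have hb' : ∀ j, b j = x := fun j => (hbv j).elim id id
    have e1 : ∏ j, f (a j) = ∏ _j : Fin q, f x :=
      Finset.prod_congr rfl fun j _ => congrArg f (ha' j)
    have e2 : ∏ j, f (b j) = ∏ _j : Fin q, f x :=
      Finset.prod_congr rfl fun j _ => congrArg f (hb' j)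
    rw [e1, e2]
  · have hne : x ≠ y := Nat.ne_of_lt hlt
    obtain ⟨hpa, hsa⟩ := stmt0_aux_decomp f x y a hav hne
    obtain ⟨hpb, hsb⟩ := stmt0_aux_decomp f x y b hbv hne
    set s := (Finset.univ.filter (fun j => a j = y)).card with hs
    set t := (Finset.univ.filter (fun j => b j = y)).card with ht
    have hsq : s ≤ q := le_trans (Finset.card_filter_le _ _) (by simp)
    have htq : t ≤ q := le_trans (Finset.card_filter_le _ _) (by simp)
    obtain ⟨d, hd⟩ : ∃ d, y = x + d + 1 := ⟨y - x - 1, by omega⟩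
    have key : ∀ u, u ≤ q → x * (q - u) + y * u = x * q + (d + 1) * u := by
      intro u hu
      calc x * (q - u) + y * u = x * (q - u) + x * u + (d + 1) * u := by rw [hd]; ring
        _ = x * ((q - u) + u) + (d + 1) * u := by ring
        _ = x * q + (d + 1) * u := by rw [Nat.sub_add_cancel hu]
    have heq : x * q + (d + 1) * s = x * q + (d + 1) * t := by
      rw [← key s hsq, ← key t htq, ← hsa, ← hsb, hsum]
    have hst : s = t :=
      Nat.eq_of_mul_eq_mul_left (show 0 < d + 1 by omega) (Nat.add_left_cancel heq)
    rw [hpa, hpb, hst]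

/-- a balanced vector takes only the values `n/q` and `⌈n/q⌉`. -/
lemma stmt0_aux_balvals {q : ℕ} (n : ℕ) (hq : 0 < q) (c : Fin q → ℕ) (hsum : ∑ j, c j = n)
    (hbal : ∀ j k, c j ≤ c k + 1) :
    ∀ j, c j = n / q ∨ c j = (n + q - 1) / q := by
  classical
  have hne : (Finset.univ : Finset (Fin q)).Nonempty := by
    simpa [Finset.univ_nonempty_iff] using Fin.pos_iff_nonempty.mp hq
  obtain ⟨k0, -, hmin⟩ := Finset.exists_min_image Finset.univ c hne
  set m := c k0 with hm
  have hvals : ∀ j, c j = m ∨ c j = m + 1 := by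
    intro j
    have h1 := hmin j (Finset.mem_univ j)
    have h2 := hbal j k0
    omega
  have hmne : m ≠ m + 1 := by omega
  obtain ⟨-, hsa⟩ := stmt0_aux_decomp id m (m + 1) c hvals hmne
  set s := (Finset.univ.filter (fun j => c j = m + 1)).card with hs
  have hsq : s ≤ q := le_trans (Finset.card_filter_le _ _) (by simp)
  have hk0 : k0 ∉ Finset.univ.filter (fun j => c j = m + 1) := by
    simp [← hm]
  have hslt : s < q := by
    have : (Finset.univ.filter (fun j => c j = m + 1)) ⊂ Finset.univ :=
      Finset.ssubset_univ_iff.mpr (fun h => hk0 (by rw [h]; exact Finset.mem_univ k0))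
    have := Finset.card_lt_card this
    simpa using this
  have hn : n = m * q + s := by
    rw [← hsum]
    have : (id : ℕ → ℕ) ∘ c = c := rfl
    calc ∑ j, c j = m * (q - s) + (m + 1) * s := by simpa using hsa
      _ = m * ((q - s) + s) + s := by ring
      _ = m * q + s := by rw [Nat.sub_add_cancel hsq]
  have hdiv : n / q = m := by
    rw [hn, Nat.add_comm, Nat.add_mul_div_right _ _ hq, Nat.div_eq_of_lt hslt, Nat.zero_add]
  intro j
  rcases hvals j with h | h
  · left; rw [h, hdiv]
  · right
    have hs1 : 1 ≤ s := by
      have : j ∈ Finset.univ.filter (fun j => c j = m + 1) := by simp [h]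
      have := Finset.card_pos.mpr ⟨j, this⟩
      omega
    have hceil : (n + q - 1) / q = m + 1 := by
      have he : n + q - 1 = (s - 1) + q * (m + 1) := by rw [hn]; ring_nf; omega
      rw [he, Nat.add_mul_div_left _ _ hq, Nat.div_eq_of_lt (by omega), Nat.zero_add]
    rw [h, hceil]

lemma stmt0_aux_pointwise (q n : ℕ) (hq : 0 < q) (i : ℕ) (b : Fin q → ℕ) (hb : ∑ j, b j = n)
    (hbal : ∀ j, b j = n / q ∨ b j = (n + q - 1) / q) :
    ∀ M (a : Fin q → ℕ), ∑ j, a j * a j ≤ M → ∑ j, a j = n →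
      ∏ j, Nat.choose (a j) i ≤ ∏ j, Nat.choose (b j) i := by
  intro M
  induction M using Nat.strong_induction_on with
  | _ M IH =>
    intro a hM hsum
    by_cases hbalA : ∀ j k, a j ≤ a k + 1
    · -- a is balanced: products are equal
      have hav := stmt0_aux_balvals n hq a hsum hbalA
      have hfc : n / q ≤ (n + q - 1) / q := Nat.div_le_div_right (by omega)
      exact le_of_eq (stmt0_aux_prodeq (fun x => Nat.choose x i) _ _ hfc a b hav hbal
        (by rw [hsum, hb]))
    · push_neg at hbalA
      obtain ⟨j, k, hjk2⟩ := hbalA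
      have hjk : j ≠ k := by intro h; rw [h] at hjk2; omega
      set a' := Function.update (Function.update a j (a j - 1)) k (a k + 1) with ha'
      have hsum' : ∑ t, a' t = n := by
        have := stmt0_aux_sum2 id a j k hjk (a j - 1) (a k + 1)
        simp only [id_eq] at this
        rw [← ha'] at this
        omega
      have hsq : ∑ t, a' t * a' t < ∑ t, a t * a t := by
        have := stmt0_aux_sum2 (fun x => x * x) a j k hjk (a j - 1) (a k + 1)
        rw [← ha'] at this
        have hd : (a j - 1) * (a j - 1) + (a k + 1) * (a k + 1) < a j * a j + a k * a k := by
          obtain ⟨d, hd⟩ : ∃ d, a j = a k + 2 + d := ⟨a j - a k - 2, by omega⟩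
          rw [hd]
          have h1 : a k + 2 + d - 1 = a k + 1 + d := by omega
          rw [h1]
          nlinarith
        omega
      have hstep : ∏ t, Nat.choose (a t) i ≤ ∏ t, Nat.choose (a' t) i := by
        apply stmt0_aux_prod2 (fun x => Nat.choose x i) a j k hjk
        exact stmt0_aux_smooth i (a j) (a k) (by omega)
      calc ∏ t, Nat.choose (a t) i ≤ ∏ t, Nat.choose (a' t) i := hstep
        _ ≤ ∏ t, Nat.choose (b t) i :=
          IH (∑ t, a' t * a' t) (lt_of_lt_of_le hsq hM) a' (le_refl _) hsum'

/-- The sum `∑ i, ∏ j C(a j, i)` subject to `∑ j, a j = n` is maximized when all the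
`a j` are as equal as possible (each equal to `⌈n/q⌉` or `⌊n/q⌋`). -/
theorem stmt0 (q n : ℕ) (hq : 2 ≤ q) (hn : 1 ≤ n)
    (a b : Fin q → ℕ) (ha : ∑ j, a j = n) (hb : ∑ j, b j = n)
    (hbal : ∀ j, b j = n / q ∨ b j = (n + q - 1) / q) :
    ∑ i ∈ Finset.range (n + 1), ∏ j, Nat.choose (a j) i ≤
      ∑ i ∈ Finset.range (n + 1), ∏ j, Nat.choose (b j) i := by
  apply Finset.sum_le_sum
  intro i _
  exact stmt0_aux_pointwise q n (by omega) i b hb hbal (∑ j, a j * a j) a (le_refl _) ha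
end

section
/- Cube colorings are dense in the space of measurable k-colorings: for every measurable k-coloring f of ℝ^d, every ε > 0, and every positive integer n, there exists a coloring g agreeing with f outside [-n,n]^d which is constant on each of the N^d half-open equal subcubes of [-n,n]^d for some N, and such that d(f,g) < ε. -/
open MeasureTheory Set


/-- The distance between two measurable `k`-colorings of `ℝ^d`:
`d(f,g) = ∑_{n≥1} 2^{-n} λ({x ∈ [-n,n]^d : f x ≠ g x}) / (2n)^d`. -/
noncomputable def colDist (d k : ℕ) (f g : (Fin d → ℝ) → Fin k) : ℝ :=
  ∑' n : ℕ,
    (MeasureTheory.volume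
        {x : Fin d → ℝ | (∀ i, |x i| ≤ (n : ℝ) + 1) ∧ f x ≠ g x}).toReal /
      ((2 * ((n : ℝ) + 1)) ^ d * 2 ^ (n + 1))

/-- Cube colorings are dense: every measurable `k`-coloring of `ℝ^d` can be approximated
within `ε` by a coloring agreeing with it outside `[-n,n]^d` and constant on each of the
`N^d` half-open congruent subcubes of `[-n,n]^d` for some `N > 0`. -/
theorem stmt4 (d k : ℕ) (hd : 1 ≤ d) (hk : 1 ≤ k)
    (f : (Fin d → ℝ) → Fin k) (hf : Measurable f)
    (ε : ℝ) (hε : 0 < ε) (n : ℕ) (hn : 1 ≤ n) :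
    ∃ g : (Fin d → ℝ) → Fin k, Measurable g ∧
      (∀ x : Fin d → ℝ, (∃ i, ¬(-(n : ℝ) ≤ x i ∧ x i < n)) → g x = f x) ∧
      (∃ N : ℕ, 0 < N ∧ ∀ x y : Fin d → ℝ,
        (∀ i, -(n : ℝ) ≤ x i ∧ x i < n) → (∀ i, -(n : ℝ) ≤ y i ∧ y i < n) →
        (∀ i, ⌊(x i + n) * N / (2 * n)⌋ = ⌊(y i + n) * N / (2 * n)⌋) → g x = g y) ∧
      colDist d k f g < ε := by
  classical
  have hn0 : (0:ℝ) < n := by exact_mod_cast hn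
  have hk0 : (0:ℝ) < k := by exact_mod_cast hk
  set C : Set (Fin d → ℝ) := Set.univ.pi fun _ => Set.Ico (-(n:ℝ)) n with hCdef
  have hCmem : ∀ x, x ∈ C ↔ ∀ i, -(n:ℝ) ≤ x i ∧ x i < n := by
    intro x; simp [hCdef, Set.mem_pi, Set.mem_Ico]
  have hCmeas : MeasurableSet C := MeasurableSet.univ_pi fun i => measurableSet_Ico
  have hCvol : volume C ≠ ⊤ := by
    rw [hCdef, volume_pi_pi]
    exact (ENNReal.prod_lt_top (fun i _ => by simp [Real.volume_Ico])).ne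
  -- the color classes inside the cube
  set A : Fin k → Set (Fin d → ℝ) := fun c => f ⁻¹' {c} ∩ C with hAdef
  have hAmeas : ∀ c, MeasurableSet (A c) := fun c =>
    (hf (measurableSet_singleton c)).inter hCmeas
  have hAvol : ∀ c, volume (A c) ≠ ⊤ := fun c =>
    ne_top_of_le_ne_top hCvol (measure_mono Set.inter_subset_right)
  -- compact approximations
  have hKex : ∀ c : Fin k, ∃ K ⊆ A c, IsCompact K ∧
      volume (A c \ K) < ENNReal.ofReal (ε / k) := by
    intro c
    exact (hAmeas c).exists_isCompact_diff_lt (hAvol c)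
      (ENNReal.ofReal_pos.mpr (by positivity)).ne'
  choose K hKsub hKcomp hKlt using hKex
  -- separation
  have hsep : ∀ c c' : Fin k, c ≠ c' → ∃ δ : ℝ, 0 < δ ∧
      ∀ x ∈ K c, ∀ y ∈ K c', δ ≤ dist x y := by
    intro c c' hne
    rcases Set.eq_empty_or_nonempty (K c) with h1 | h1
    · exact ⟨1, one_pos, by simp [h1]⟩
    rcases Set.eq_empty_or_nonempty (K c') with h2 | h2
    · exact ⟨1, one_pos, by simp [h2]⟩
    obtain ⟨x0, hx0, hmin⟩ := (hKcomp c).exists_isMinOn h1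
      (Metric.continuous_infDist_pt (K c')).continuousOn
    refine ⟨Metric.infDist x0 (K c'), ?_, ?_⟩
    · rw [← (hKcomp c').isClosed.notMem_iff_infDist_pos h2]
      intro hx0'
      have h1' : f x0 = c := (hKsub c hx0).1
      have h2' : f x0 = c' := (hKsub c' hx0').1
      exact hne (h1' ▸ h2' ▸ rfl)
    · intro x hx y hy
      exact le_trans (hmin hx) (Metric.infDist_le_dist_of_mem hy)
  choose D hDpos hDle using hsep
  set D' : Fin k × Fin k → ℝ := fun p => if h : p.1 ≠ p.2 then D p.1 p.2 h else 1 with hD'def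
  have hne : (Finset.univ : Finset (Fin k × Fin k)).Nonempty :=
    ⟨(⟨0, hk⟩, ⟨0, hk⟩), Finset.mem_univ _⟩
  set δ : ℝ := Finset.inf' Finset.univ hne D' with hδdef
  have hδpos : 0 < δ := by
    rw [hδdef, Finset.lt_inf'_iff]
    intro p _
    rcases eq_or_ne p.1 p.2 with h | h
    · simp [hD'def, h]
    · simp [hD'def, h, hDpos]
  have hδle : ∀ c c' (h : c ≠ c'), δ ≤ D c c' h := by
    intro c c' h
    have := Finset.inf'_le (f := D') (b := (c, c')) (Finset.mem_univ _)
    exact this.trans_eq (dif_pos h)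
  -- choice of N
  set N : ℕ := max 1 ⌈(2 * n) / δ⌉₊ with hNdef
  have hN0 : 0 < N := Nat.lt_of_lt_of_le Nat.one_pos (le_max_left _ _)
  have hN0' : (0:ℝ) < N := by exact_mod_cast hN0
  have hNδ : 2 * (n:ℝ) / N ≤ δ := by
    rw [div_le_iff₀ hN0']
    have h1 : (2 * (n:ℝ)) / δ ≤ (⌈(2 * n) / δ⌉₊ : ℝ) := Nat.le_ceil _
    have h2 : ((⌈(2 * n) / δ⌉₊ : ℕ) : ℝ) ≤ N := Nat.cast_le.mpr (le_max_right 1 _)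
    calc 2 * (n:ℝ) = (2 * n) / δ * δ := by field_simp
    _ ≤ (N:ℝ) * δ := by nlinarith
    _ = δ * N := mul_comm _ _
  -- index and coloring
  set idx : (Fin d → ℝ) → (Fin d → ℤ) := fun x i => ⌊(x i + n) * N / (2 * n)⌋ with hidxdef
  set color : (Fin d → ℤ) → Fin k := fun j =>
    if h : ∃ c, ∃ y ∈ K c, idx y = j then h.choose else ⟨0, hk⟩ with hcolordef
  set g : (Fin d → ℝ) → Fin k := C.piecewise (fun x => color (idx x)) f with hgdef
  have hgC : ∀ x ∈ C, g x = color (idx x) := fun x hx => Set.piecewise_eq_of_mem _ _ _ hx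
  have hgnC : ∀ x ∉ C, g x = f x := fun x hx => Set.piecewise_eq_of_notMem _ _ _ hx
  -- measurability
  have hgmeas : Measurable g := by
    apply Measurable.piecewise hCmeas
    · exact (measurable_of_countable color).comp
        (measurable_pi_lambda _ fun i => Int.measurable_floor.comp
          ((((measurable_pi_apply i).add_const _).mul_const _).div_const _))
    · exact hf
  -- points in the same small cube are close
  have hclose : ∀ x y : (Fin d → ℝ), idx x = idx y → dist x y < δ := by
    intro x y hxy
    rw [dist_pi_lt_iff hδpos]
    intro i
    have hfl : ⌊(x i + n) * N / (2 * n)⌋ = ⌊(y i + n) * N / (2 * n)⌋ := congrFun hxy i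
    have h1 : |(x i + n) * N / (2 * n) - (y i + n) * N / (2 * n)| < 1 :=
      Int.abs_sub_lt_one_of_floor_eq_floor hfl
    have h2n : (0:ℝ) < 2 * n := by positivity
    have key : (x i + n) * N / (2 * n) - (y i + n) * N / (2 * n) = (x i - y i) * (N / (2 * n)) := by
      field_simp; ring
    rw [key, abs_mul, abs_of_pos (div_pos hN0' h2n)] at h1
    have : |x i - y i| < 2 * n / N := by
      rw [lt_div_iff₀ hN0']
      calc |x i - y i| * N = |x i - y i| * (N / (2*n)) * (2*n) := by field_simp
      _ < 1 * (2*n) := by nlinarith [abs_nonneg (x i - y i)]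
      _ = 2 * n := one_mul _
    calc dist (x i) (y i) = |x i - y i| := Real.dist_eq _ _
    _ < 2 * n / N := this
    _ ≤ δ := hNδ
  -- g agrees with f on each K c
  have hgK : ∀ c, ∀ x ∈ K c, g x = f x := by
    intro c x hx
    have hxC : x ∈ C := (hKsub c hx).2
    rw [hgC x hxC]
    have hex : ∃ c', ∃ y ∈ K c', idx y = idx x := ⟨c, x, hx, rfl⟩
    have hcol : color (idx x) = hex.choose := by rw [hcolordef]; exact dif_pos hex
    obtain ⟨y, hy, hyx⟩ := hex.choose_spec
    have hcc : hex.choose = c := by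
      by_contra hne'
      have h1 := hδle _ _ hne'
      have h2 := hDle _ _ hne' y hy x hx
      have h3 := hclose y x hyx
      linarith
    rw [hcol, hcc]
    have : f x = c := (hKsub c hx).1
    exact this.symm
  -- the set where f and g differ
  have hdiff : {x | f x ≠ g x} ⊆ C \ ⋃ c, K c := by
    intro x hx
    constructor
    · by_contra h
      exact hx (hgnC x h).symm
    · intro h
      obtain ⟨c, hc⟩ := Set.mem_iUnion.1 h
      exact hx (hgK c x hc).symm
  have hsub2 : C \ ⋃ c, K c ⊆ ⋃ c, (A c \ K c) := by
    rintro x ⟨hxC, hxK⟩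
    refine Set.mem_iUnion.2 ⟨f x, ⟨⟨rfl, hxC⟩, ?_⟩⟩
    intro h
    exact hxK (Set.mem_iUnion.2 ⟨f x, h⟩)
  have hvol : volume {x | f x ≠ g x} ≤ ENNReal.ofReal ε := by
    calc volume {x | f x ≠ g x} ≤ volume (⋃ c, (A c \ K c)) :=
          measure_mono (hdiff.trans hsub2)
    _ ≤ ∑' c, volume (A c \ K c) := measure_iUnion_le _
    _ ≤ ∑' _ : Fin k, ENNReal.ofReal (ε / k) := ENNReal.tsum_le_tsum fun c => (hKlt c).le
    _ = k * ENNReal.ofReal (ε / k) := by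
        rw [tsum_fintype]
        simp [Finset.sum_const, Finset.card_univ, nsmul_eq_mul]
    _ = ENNReal.ofReal ε := by
        rw [← ENNReal.ofReal_natCast k, ← ENNReal.ofReal_mul (by positivity)]
        congr 1
        field_simp
  -- term-by-term bound for colDist
  have hterm : ∀ m : ℕ,
      (volume {x : Fin d → ℝ | (∀ i, |x i| ≤ (m:ℝ) + 1) ∧ f x ≠ g x}).toReal /
        ((2 * ((m:ℝ) + 1)) ^ d * 2 ^ (m + 1)) ≤ (ε / 4) * (1 / 2) ^ m := by
    intro m
    have h1 : volume {x : Fin d → ℝ | (∀ i, |x i| ≤ (m:ℝ) + 1) ∧ f x ≠ g x}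
        ≤ ENNReal.ofReal ε :=
      le_trans (measure_mono fun x hx => hx.2) hvol
    have h2 : (volume {x : Fin d → ℝ | (∀ i, |x i| ≤ (m:ℝ) + 1) ∧ f x ≠ g x}).toReal ≤ ε :=
      ENNReal.toReal_le_of_le_ofReal hε.le h1
    have hm0 : (0:ℝ) ≤ m := Nat.cast_nonneg m
    have hden : (2:ℝ) * 2 ^ (m + 1) ≤ (2 * ((m:ℝ) + 1)) ^ d * 2 ^ (m + 1) := by
      have hb : (2:ℝ) ≤ (2 * ((m:ℝ) + 1)) ^ d := by
        calc (2:ℝ) = 2 ^ 1 := (pow_one 2).symm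
        _ ≤ 2 ^ d := pow_le_pow_right₀ one_le_two hd
        _ ≤ (2 * ((m:ℝ) + 1)) ^ d := pow_le_pow_left₀ (by norm_num) (by nlinarith) d
      nlinarith [pow_pos (two_pos : (0:ℝ) < 2) (m + 1)]
    calc (volume {x : Fin d → ℝ | (∀ i, |x i| ≤ (m:ℝ) + 1) ∧ f x ≠ g x}).toReal /
        ((2 * ((m:ℝ) + 1)) ^ d * 2 ^ (m + 1))
        ≤ ε / (2 * 2 ^ (m + 1)) := div_le_div₀ hε.le h2 (by positivity) hden
    _ = (ε / 4) * (1 / 2) ^ m := by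
        have h4 : (2:ℝ) * 2 ^ (m + 1) = 4 * 2 ^ m := by rw [pow_succ]; ring
        rw [h4, one_div, inv_pow, ← div_div, ← div_eq_mul_inv]
  have hsumg : Summable (fun m : ℕ => (ε / 4) * (1 / 2 : ℝ) ^ m) :=
    summable_geometric_two.mul_left _
  have hsumf : Summable (fun m : ℕ =>
      (volume {x : Fin d → ℝ | (∀ i, |x i| ≤ (m:ℝ) + 1) ∧ f x ≠ g x}).toReal /
        ((2 * ((m:ℝ) + 1)) ^ d * 2 ^ (m + 1))) :=
    Summable.of_nonneg_of_le (fun m => by positivity) hterm hsumg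
  have hcd : colDist d k f g < ε := by
    unfold colDist
    calc (∑' m : ℕ, (volume {x : Fin d → ℝ | (∀ i, |x i| ≤ (m:ℝ) + 1) ∧ f x ≠ g x}).toReal /
        ((2 * ((m:ℝ) + 1)) ^ d * 2 ^ (m + 1)))
        ≤ ∑' m : ℕ, (ε / 4) * (1 / 2 : ℝ) ^ m := Summable.tsum_le_tsum hterm hsumf hsumg
    _ = (ε / 4) * 2 := by rw [tsum_mul_left, tsum_geometric_two]
    _ < ε := by linarith
  refine ⟨g, hgmeas, ?_, ⟨N, hN0, ?_⟩, hcd⟩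
  · intro x hx
    apply hgnC
    rw [hCmem]
    push_neg
    obtain ⟨i, hi⟩ := hx
    by_cases h1 : -(n:ℝ) ≤ x i
    · exact ⟨i, fun _ => by push_neg at hi; exact hi h1⟩
    · exact ⟨i, fun h => absurd h h1⟩
  · intro x y hxC hyC hxy
    rw [hgC x ((hCmem x).2 hxC), hgC y ((hCmem y).2 hyC)]
    congr 1
    funext i
    exact hxy i
end

section
/- Any cut between two lexicographically consecutive points of the cube {1,...,n}^d ⊂ ℕ^d can be realized by at most 2d−1 axis-aligned hyperplane cuts. Precisely: if x < y are lexicographically consecutive points of {1,...,n}^d with x_i = y_i for i < j and x_j < y_j, then the set {z ∈ {1,...,n}^d : z ≤ x} (lexicographic order) equals the union of pieces determined by the 2j−1 hyperplanes z_1 = x_1 ± 1/2, ..., z_{j−1} = x_{j−1} ± 1/2, z_j = (x_j + y_j)/2; in particular, the lexicographic down-set of x in {1,...,n}^d is a union of at most 2j−1 ≤ 2d−1 axis-aligned boxes together determined by these cuts. -/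
/-- Lexicographic order on `Fin d → ℕ`. -/
def LexLe {d : ℕ} (x y : Fin d → ℕ) : Prop :=
  x = y ∨ ∃ j : Fin d, (∀ i, i < j → x i = y i) ∧ x j < y j

/-- If `x < y` are lexicographically consecutive points of `{1,…,n}^d`, agreeing below
coordinate `j` with `y j = x j + 1` (so `x i = n`, `y i = 1` for `i > j`), then the
lexicographic down-set of `x` in the cube is the union of the at most `j+1 ≤ d` boxes cut
out by the `2j-1` axis-aligned hyperplanes `z_i = x_i ± 1/2` (`i < j`), `z_j = x_j + 1/2`. -/
theorem stmt7 (d n : ℕ) (hd : 1 ≤ d) (hn : 1 ≤ n)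
    (x y : Fin d → ℕ) (j : Fin d)
    (hx : ∀ i, 1 ≤ x i ∧ x i ≤ n) (hy : ∀ i, 1 ≤ y i ∧ y i ≤ n)
    (hagree : ∀ i, i < j → x i = y i) (hstep : y j = x j + 1)
    (habove : ∀ i, j < i → x i = n ∧ y i = 1) :
    {z : Fin d → ℕ | (∀ i, 1 ≤ z i ∧ z i ≤ n) ∧ LexLe z x} =
      ⋃ (i : Fin d) (_ : i ≤ j),
        {z : Fin d → ℕ | (∀ i', 1 ≤ z i' ∧ z i' ≤ n) ∧
          (∀ i', i' < i → z i' = x i') ∧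
          (if i = j then z i ≤ x i else z i < x i)} := by
  ext z
  simp only [Set.mem_setOf_eq, Set.mem_iUnion]
  constructor
  · rintro ⟨hz, hzx⟩
    rcases hzx with rfl | ⟨k, hk1, hk2⟩
    · exact ⟨j, le_refl j, hz, fun i' hi' => rfl, by simp⟩
    · by_cases hkj : k ≤ j
      · refine ⟨k, hkj, hz, hk1, ?_⟩
        split
        · exact le_of_lt hk2
        · exact hk2
      · push_neg at hkj
        exact ⟨j, le_refl j, hz, fun i' hi' => hk1 i' (hi'.trans hkj),
          by simp [le_of_eq (hk1 j hkj)]⟩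
  · rintro ⟨i, hij, hz, hlt, hif⟩
    refine ⟨hz, ?_⟩
    by_cases hij' : i = j
    · subst hij'
      rw [if_pos rfl] at hif
      by_cases hzx : z = x
      · exact Or.inl hzx
      · have hne : (Finset.univ.filter fun i => z i ≠ x i).Nonempty := by
          by_contra h
          rw [Finset.not_nonempty_iff_eq_empty, Finset.filter_eq_empty_iff] at h
          exact hzx (funext fun i => not_not.1 (h (Finset.mem_univ i)))
        set k := (Finset.univ.filter fun i => z i ≠ x i).min' hne with hk
        have hkmem := Finset.min'_mem _ hne
        have hkne : z k ≠ x k := (Finset.mem_filter.1 hkmem).2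
        have hbelow : ∀ i', i' < k → z i' = x i' := by
          intro i' hi'
          by_contra h
          exact absurd (Finset.min'_le _ i'
            (Finset.mem_filter.2 ⟨Finset.mem_univ _, h⟩)) (not_le.2 hi')
        refine Or.inr ⟨k, hbelow, ?_⟩
        rcases lt_trichotomy k i with h | h | h
        · exact absurd (hlt k h) hkne
        · exact lt_of_le_of_ne (by rw [h]; exact hif) hkne
        · exact lt_of_le_of_ne (by rw [(habove k h).1]; exact (hz k).2) hkne
    · rw [if_neg hij'] at hif
      exact Or.inr ⟨i, hlt, hif⟩
end

section
/- Counting bound: if a_1 + ... + a_q = n^d with each a_j ∈ {⌈n^d/q⌉, ⌊n^d/q⌋}, then Σ_i C(a_1,i)···C(a_q,i) ≤ C(2⌈n^d/q⌉, ⌈n^d/q⌉)^(q/2), and consequently the number of subsets N of a fixed partition of an n^d-point set into parts of sizes a_1,...,a_q meeting every part in exactly the same number of points is at most C(2⌈n^d/q⌉, ⌈n^d/q⌉)^(q/2). -/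
open Finset

/-- Vandermonde special case: sum of squares of binomial coefficients. -/
lemma sum_choose_sq (m : ℕ) :
    ∑ i ∈ Finset.range (m + 1), (m.choose i) ^ 2 = (2 * m).choose m := by
  rw [two_mul, Nat.add_choose_eq, Finset.Nat.sum_antidiagonal_eq_sum_range_succ_mk]
  refine Finset.sum_congr rfl fun i hi => ?_
  rw [Finset.mem_range] at hi
  show m.choose i ^ 2 = m.choose i * m.choose (m - i)
  rw [Nat.choose_symm (by omega : i ≤ m)]
  ring

/-- ℓ^q-norm vs ℓ^2-norm style inequality. -/
lemma sum_pow_le {ι : Type*} (s : Finset ι) (x : ι → ℝ) (hx : ∀ i, 0 ≤ x i)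
    (q : ℕ) (hq : 2 ≤ q) (S : ℝ) (hS1 : 1 ≤ S)
    (hsum : ∑ i ∈ s, x i ^ 2 ≤ S) :
    ∑ i ∈ s, x i ^ q ≤ S ^ ((q : ℝ) / 2) := by
  have hS0 : (0:ℝ) < S := lt_of_lt_of_le one_pos hS1
  have hxs : ∀ i ∈ s, x i ≤ Real.sqrt S := by
    intro i hi
    rw [show Real.sqrt S = Real.sqrt S from rfl]
    have h2 : x i ^ 2 ≤ S := le_trans (Finset.single_le_sum (fun j _ => sq_nonneg (x j)) hi) hsum
    nlinarith [Real.sq_sqrt hS0.le, Real.sqrt_nonneg S, hx i]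
  have key : ∑ i ∈ s, x i ^ q ≤ S * Real.sqrt S ^ (q - 2) := by
    calc ∑ i ∈ s, x i ^ q = ∑ i ∈ s, x i ^ 2 * x i ^ (q - 2) := by
          refine Finset.sum_congr rfl fun i _ => ?_
          rw [← pow_add]; congr 1; omega
      _ ≤ ∑ i ∈ s, x i ^ 2 * Real.sqrt S ^ (q - 2) := by
          refine Finset.sum_le_sum fun i hi => ?_
          exact mul_le_mul_of_nonneg_left
            (pow_le_pow_left₀ (hx i) (hxs i hi) _) (sq_nonneg _)
      _ = (∑ i ∈ s, x i ^ 2) * Real.sqrt S ^ (q - 2) := by rw [← Finset.sum_mul]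
      _ ≤ S * Real.sqrt S ^ (q - 2) := by
          exact mul_le_mul_of_nonneg_right hsum (pow_nonneg (Real.sqrt_nonneg S) _)
  refine key.trans_eq ?_
  rw [Real.sqrt_eq_rpow, ← Real.rpow_natCast (S ^ ((1:ℝ)/2)) (q - 2),
    ← Real.rpow_mul hS0.le]
  rw [show S * S ^ ((1:ℝ)/2 * ((q:ℕ) - 2 : ℕ)) = S ^ (1 + (1:ℝ)/2 * ((q:ℕ) - 2 : ℕ)) by
    rw [Real.rpow_add hS0, Real.rpow_one]]
  congr 1
  have : (((q : ℕ) - 2 : ℕ) : ℝ) = (q : ℝ) - 2 := by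
    push_cast [Nat.cast_sub hq]; ring
  rw [this]; ring

/-- Counting bound: if an `n^d`-point set is partitioned into parts `A 1,…,A q` whose
sizes are each `⌈n^d/q⌉` or `⌊n^d/q⌋`, then with `m = ⌈n^d/q⌉` we have
`∑ i, ∏ j C(|A j|, i) ≤ C(2m,m)^(q/2)`, and consequently the number of subsets meeting
all parts in the same number of points is at most `C(2m,m)^(q/2)`. -/
theorem stmt9 (q n d : ℕ) (hq : 2 ≤ q) (hn : 1 ≤ n) (hd : 1 ≤ d)
    (A : Fin q → Finset (Fin (n ^ d)))
    (hdisj : ∀ j j' : Fin q, j ≠ j' → Disjoint (A j) (A j'))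
    (hcover : (Finset.univ : Finset (Fin (n ^ d))) = Finset.univ.biUnion A)
    (hsizes : ∀ j, (A j).card = n ^ d / q ∨ (A j).card = (n ^ d + q - 1) / q) :
    ((∑ i ∈ Finset.range (n ^ d + 1), ∏ j, Nat.choose (A j).card i : ℕ) : ℝ) ≤
        ((Nat.choose (2 * ((n ^ d + q - 1) / q)) ((n ^ d + q - 1) / q) : ℕ) : ℝ) ^
          ((q : ℝ) / 2) ∧
      (((Finset.univ : Finset (Fin (n ^ d))).powerset.filter fun N =>
            ∀ j j' : Fin q, (N ∩ A j).card = (N ∩ A j').card).card : ℝ) ≤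
        ((Nat.choose (2 * ((n ^ d + q - 1) / q)) ((n ^ d + q - 1) / q) : ℕ) : ℝ) ^
          ((q : ℝ) / 2) := by
  have hM1 : 1 ≤ n ^ d := Nat.one_le_pow _ _ (by omega)
  set m := (n ^ d + q - 1) / q with hm
  -- each part has size ≤ m
  have hale : ∀ j, (A j).card ≤ m := by
    intro j
    rcases hsizes j with h | h
    · rw [h]; exact Nat.div_le_div_right (by omega)
    · rw [h]
  -- m ≤ n ^ d
  have hmM : m ≤ n ^ d := by
    have h2 : n ^ d * (q - 1) + n ^ d = n ^ d * q := by rw [← Nat.mul_succ]; congr 1; omega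
    have h3 : q - 1 ≤ n ^ d * (q - 1) := Nat.le_mul_of_pos_left _ (by omega)
    have : n ^ d + q - 1 ≤ n ^ d * q := by omega
    calc m ≤ n ^ d * q / q := Nat.div_le_div_right this
      _ = n ^ d := Nat.mul_div_cancel _ (by omega)
  set S : ℕ := (2 * m).choose m with hS
  have hS1 : (1:ℝ) ≤ (S : ℝ) := by
    exact_mod_cast Nat.one_le_iff_ne_zero.mpr (Nat.choose_pos (by omega)).ne'
  -- sum of squares over the bigger range
  have hsq : ∑ i ∈ Finset.range (n ^ d + 1), ((m.choose i : ℝ)) ^ 2 ≤ (S : ℝ) := by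
    have hnat : ∑ i ∈ Finset.range (n ^ d + 1), (m.choose i) ^ 2 = S := by
      rw [hS, ← sum_choose_sq m]
      refine (Finset.sum_subset (Finset.range_subset_range.2 (by omega)) ?_).symm
      intro i hi hni
      rw [Finset.mem_range] at hi hni
      rw [Nat.choose_eq_zero_of_lt (by omega)]; ring
    refine le_of_eq ?_
    calc ∑ i ∈ Finset.range (n ^ d + 1), ((m.choose i : ℝ)) ^ 2
        = ((∑ i ∈ Finset.range (n ^ d + 1), (m.choose i) ^ 2 : ℕ) : ℝ) := by push_cast; rfl
      _ = (S : ℝ) := by rw [hnat]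
  -- first claim
  have first : ((∑ i ∈ Finset.range (n ^ d + 1), ∏ j, Nat.choose (A j).card i : ℕ) : ℝ) ≤
      ((S : ℕ) : ℝ) ^ ((q : ℝ) / 2) := by
    have step1 : (∑ i ∈ Finset.range (n ^ d + 1), ∏ j, Nat.choose (A j).card i : ℕ) ≤
        ∑ i ∈ Finset.range (n ^ d + 1), (m.choose i) ^ q := by
      refine Finset.sum_le_sum fun i _ => ?_
      calc ∏ j, Nat.choose (A j).card i ≤ ∏ _j : Fin q, m.choose i :=
            Finset.prod_le_prod' fun j _ => Nat.choose_le_choose i (hale j)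
        _ = (m.choose i) ^ q := by
            rw [Finset.prod_const, Finset.card_univ, Fintype.card_fin]
    calc ((∑ i ∈ Finset.range (n ^ d + 1), ∏ j, Nat.choose (A j).card i : ℕ) : ℝ)
        ≤ ((∑ i ∈ Finset.range (n ^ d + 1), (m.choose i) ^ q : ℕ) : ℝ) := by exact_mod_cast step1
      _ = ∑ i ∈ Finset.range (n ^ d + 1), ((m.choose i : ℝ)) ^ q := by push_cast; rfl
      _ ≤ ((S : ℕ) : ℝ) ^ ((q : ℝ) / 2) := by
          exact sum_pow_le _ _ (fun i => by positivity) q hq _ hS1 hsq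
  refine ⟨first, ?_⟩
  -- second claim: card of filter ≤ the sum
  have j0 : Fin q := ⟨0, by omega⟩
  have card_le : ((Finset.univ : Finset (Fin (n ^ d))).powerset.filter fun N =>
        ∀ j j' : Fin q, (N ∩ A j).card = (N ∩ A j').card).card ≤
      ∑ i ∈ Finset.range (n ^ d + 1), ∏ j, Nat.choose (A j).card i := by
    have hsub : ((Finset.univ : Finset (Fin (n ^ d))).powerset.filter fun N =>
        ∀ j j' : Fin q, (N ∩ A j).card = (N ∩ A j').card) ⊆
        (Finset.range (n ^ d + 1)).biUnion fun i =>
          (Finset.univ : Finset (Fin (n ^ d))).powerset.filter fun N =>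
            ∀ j : Fin q, (N ∩ A j).card = i := by
      intro N hN
      rw [Finset.mem_filter] at hN
      rw [Finset.mem_biUnion]
      refine ⟨(N ∩ A j0).card, ?_, ?_⟩
      · rw [Finset.mem_range]
        have : (N ∩ A j0).card ≤ Fintype.card (Fin (n ^ d)) := Finset.card_le_card (Finset.subset_univ _) |>.trans_eq (Finset.card_univ)
        simpa using Nat.lt_succ_of_le this
      · exact Finset.mem_filter.mpr ⟨hN.1, fun j => hN.2 j j0⟩
    refine (Finset.card_le_card hsub).trans ((Finset.card_biUnion_le).trans ?_)
    refine Finset.sum_le_sum fun i _ => ?_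
    -- injective map into product of powersetCards
    have hinj : (((Finset.univ : Finset (Fin (n ^ d))).powerset.filter fun N =>
          ∀ j : Fin q, (N ∩ A j).card = i)).card ≤
        (Fintype.piFinset fun j : Fin q => (A j).powersetCard i).card := by
      refine Finset.card_le_card_of_injOn (fun N => fun j => N ∩ A j) ?_ ?_
      · intro N hN
        rw [Finset.mem_coe, Finset.mem_filter] at hN
        rw [Finset.mem_coe, Fintype.mem_piFinset]
        intro j
        rw [Finset.mem_powersetCard]
        exact ⟨Finset.inter_subset_right, hN.2 j⟩
      · intro N _ N' _ h
        have h' : ∀ j, N ∩ A j = N' ∩ A j := fun j => congrFun h j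
        ext x
        have hx : x ∈ Finset.univ.biUnion A := by rw [← hcover]; exact Finset.mem_univ x
        rw [Finset.mem_biUnion] at hx
        obtain ⟨j, _, hj⟩ := hx
        constructor <;> intro hxN
        · have : x ∈ N ∩ A j := Finset.mem_inter.mpr ⟨hxN, hj⟩
          rw [h' j] at this
          exact (Finset.mem_inter.mp this).1
        · have : x ∈ N' ∩ A j := Finset.mem_inter.mpr ⟨hxN, hj⟩
          rw [← h' j] at this
          exact (Finset.mem_inter.mp this).1
    refine hinj.trans_eq ?_
    rw [Fintype.card_piFinset]
    exact Finset.prod_congr rfl fun j _ => Finset.card_powersetCard _ _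
  calc (((Finset.univ : Finset (Fin (n ^ d))).powerset.filter fun N =>
        ∀ j j' : Fin q, (N ∩ A j).card = (N ∩ A j').card).card : ℝ)
      ≤ ((∑ i ∈ Finset.range (n ^ d + 1), ∏ j, Nat.choose (A j).card i : ℕ) : ℝ) := by
        exact_mod_cast card_le
    _ ≤ ((S : ℕ) : ℝ) ^ ((q : ℝ) / 2) := first
end

section
/- Upper bound for discrete multidimensional necklace splitting: assuming Alon's necklace splitting theorem (every k-colored discrete 1-dimensional necklace with each color class of size divisible by q has a fair q-splitting using at most k(q−1) cuts), every k-colored discrete d-dimensional necklace has a fair q-splitting using at most (2d−1)·k·(q−1) axis-aligned hyperplane cuts. -/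
/-- The discrete cube `{1,…,n}^d ⊆ ℕ^d`. -/
def dCube (d n : ℕ) : Finset (Fin d → ℕ) :=
  Fintype.piFinset fun _ : Fin d => Finset.Icc 1 n

/-- `color` admits a fair `q`-splitting of the discrete necklace `{1,…,n}^d` using `t`
axis-aligned hyperplane cuts: the cut `(i,m)` is the hyperplane `z_i = m + 1/2`, the
labeling into `q` parts is constant on the pieces of the arrangement, and every part
gets exactly `1/q` of each color class. (Cuts may repeat, so this models "at most `t`".) -/
def HasFairSplit (d n k q t : ℕ) (color : (Fin d → ℕ) → Fin k) : Prop :=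
  ∃ (cut : Fin t → Fin d × ℕ) (part : (Fin d → ℕ) → Fin q),
    (∀ z w : Fin d → ℕ,
      (∀ s, z (cut s).1 ≤ (cut s).2 ↔ w (cut s).1 ≤ (cut s).2) → part z = part w) ∧
    ∀ (j : Fin k) (l : Fin q),
      q * ((dCube d n).filter fun z => color z = j ∧ part z = l).card =
        ((dCube d n).filter fun z => color z = j).card

namespace Stmt10Aux

/-- base-`n` value of a digit string (index 0 least significant). -/
def S (n : ℕ) {d : ℕ} (x : Fin d → ℕ) : ℕ := ∑ i, x i * n ^ (i : ℕ)

lemma key {n a b A B : ℕ} (ha : a < n) (hb : b < n) :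
    a + n * A ≤ b + n * B ↔ A < B ∨ (A = B ∧ a ≤ b) := by
  rcases lt_trichotomy A B with h | h | h
  · have h1 : n * A + n ≤ n * B := by
      have h2 := Nat.mul_le_mul_left n (Nat.succ_le_of_lt h)
      rw [Nat.mul_succ] at h2
      omega
    omega
  · subst h; omega
  · have h1 : n * B + n ≤ n * A := by
      have h2 := Nat.mul_le_mul_left n (Nat.succ_le_of_lt h)
      rw [Nat.mul_succ] at h2
      omega
    omega

lemma S_succ (n : ℕ) {d : ℕ} (x : Fin (d + 1) → ℕ) :
    S n x = x 0 + n * S n (fun i => x i.succ) := by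
  unfold S
  rw [Fin.sum_univ_succ, Finset.mul_sum]
  simp only [Fin.val_zero, pow_zero, mul_one, Fin.val_succ, pow_succ]
  congr 1
  exact Finset.sum_congr rfl fun i _ => by ring

lemma detC : ∀ (d n : ℕ) (y x x' : Fin d → ℕ), (∀ i, x i < n) → (∀ i, x' i < n) →
    (∀ i, y i < n) →
    (∀ i, (x i ≤ y i ↔ x' i ≤ y i) ∧ (y i ≤ x i ↔ y i ≤ x' i)) →
    (S n x ≤ S n y ↔ S n x' ≤ S n y) ∧ (S n y ≤ S n x ↔ S n y ≤ S n x') := by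
  intro d
  induction d with
  | zero => intro n y x x' _ _ _ _; simp [S]
  | succ m ih =>
    intro n y x x' hx hx' hy h
    rw [S_succ, S_succ, S_succ]
    obtain ⟨ih1, ih2⟩ := ih n (fun i => y i.succ) (fun i => x i.succ) (fun i => x' i.succ)
      (fun i => hx _) (fun i => hx' _) (fun i => hy _) (fun i => h _)
    rw [key (hx 0) (hy 0), key (hx' 0) (hy 0), key (hy 0) (hx 0), key (hy 0) (hx' 0)]
    have h0 := h 0
    omega

lemma detB (m n : ℕ) (y x x' : Fin (m + 1) → ℕ) (hx : ∀ i, x i < n) (hx' : ∀ i, x' i < n)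
    (hy : ∀ i, y i < n) (h0 : x 0 ≤ y 0 ↔ x' 0 ≤ y 0)
    (h : ∀ i : Fin m, (x i.succ ≤ y i.succ ↔ x' i.succ ≤ y i.succ) ∧
        (y i.succ ≤ x i.succ ↔ y i.succ ≤ x' i.succ)) :
    S n x ≤ S n y ↔ S n x' ≤ S n y := by
  rw [S_succ, S_succ, S_succ]
  obtain ⟨ih1, ih2⟩ := detC m n (fun i => y i.succ) (fun i => x i.succ) (fun i => x' i.succ)
    (fun i => hx _) (fun i => hx' _) (fun i => hy _) h
  rw [key (hx 0) (hy 0), key (hx' 0) (hy 0)]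
  omega

lemma mem_dCube {d n : ℕ} {z : Fin d → ℕ} :
    z ∈ dCube d n ↔ ∀ i, 1 ≤ z i ∧ z i ≤ n := by
  simp [dCube, Fintype.mem_piFinset, Finset.mem_Icc]

/-- the lexicographic position (in `{1,…,n^d}`) of a cube point -/
def eVal (n : ℕ) {d : ℕ} (z : Fin d → ℕ) : ℕ := S n (fun i => z i - 1) + 1

/-- inverse of `eVal` on `{1,…,n^d}` -/
def dec (n d : ℕ) (c : ℕ) : Fin d → ℕ :=
  if h : c - 1 < n ^ d then
    fun i => ((finFunctionFinEquiv.symm ⟨c - 1, h⟩ : Fin d → Fin n) i : ℕ) + 1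
  else fun _ => 1

lemma eVal_eq_equiv {d n : ℕ} {z : Fin d → ℕ} (hz : z ∈ dCube d n) :
    eVal n z = (finFunctionFinEquiv (fun i => (⟨z i - 1, by
      have := mem_dCube.mp hz i; omega⟩ : Fin n)) : ℕ) + 1 := by
  rw [finFunctionFinEquiv_apply]
  rfl

lemma eVal_mem {d n : ℕ} {z : Fin d → ℕ} (hz : z ∈ dCube d n) :
    1 ≤ eVal n z ∧ eVal n z ≤ n ^ d := by
  rw [eVal_eq_equiv hz]
  have := (finFunctionFinEquiv (fun i : Fin d => (⟨z i - 1, by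
      have := mem_dCube.mp hz i; omega⟩ : Fin n))).isLt
  omega

lemma dec_eVal {d n : ℕ} {z : Fin d → ℕ} (hz : z ∈ dCube d n) :
    dec n d (eVal n z) = z := by
  have h1 := eVal_eq_equiv hz
  set x : Fin d → Fin n := fun i => (⟨z i - 1, by
      have := mem_dCube.mp hz i; omega⟩ : Fin n) with hx
  have h2 : eVal n z - 1 < n ^ d := by
    have := (finFunctionFinEquiv x).isLt; omega
  funext i
  rw [dec, dif_pos h2]
  have h3 : (⟨eVal n z - 1, h2⟩ : Fin (n ^ d)) = finFunctionFinEquiv x := by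
    apply Fin.ext; simp [h1]
  rw [h3, Equiv.symm_apply_apply]
  have := mem_dCube.mp hz i
  simp [hx]
  omega

lemma dec_mem {d n c : ℕ} (h1 : 1 ≤ c) (h2 : c ≤ n ^ d) (hn : 1 ≤ n) :
    dec n d c ∈ dCube d n := by
  have h : c - 1 < n ^ d := by omega
  rw [mem_dCube]
  intro i
  rw [dec, dif_pos h]
  have := ((finFunctionFinEquiv.symm ⟨c - 1, h⟩ : Fin d → Fin n) i).isLt
  omega

lemma eVal_dec {d n c : ℕ} (h1 : 1 ≤ c) (h2 : c ≤ n ^ d) (hn : 1 ≤ n) :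
    eVal n (dec n d c) = c := by
  have h : c - 1 < n ^ d := by omega
  have hmem := dec_mem h1 h2 hn (d := d)
  rw [eVal_eq_equiv hmem]
  have h3 : (fun i => (⟨dec n d c i - 1, by
      have := mem_dCube.mp hmem i; omega⟩ : Fin n))
      = (finFunctionFinEquiv.symm ⟨c - 1, h⟩ : Fin d → Fin n) := by
    funext i
    apply Fin.ext
    simp [dec, dif_pos h]
  rw [h3, Equiv.apply_symm_apply]
  simp
  omega

lemma card_transfer (d n : ℕ) (p : ℕ → Prop) [DecidablePred p] (hn : 1 ≤ n) :
    ((dCube d n).filter fun z => p (eVal n z)).card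
      = ((dCube 1 (n ^ d)).filter fun y => p (y 0)).card := by
  apply Finset.card_bij (fun z _ => fun _ : Fin 1 => eVal n z)
  · intro z hz
    rw [Finset.mem_filter] at hz ⊢
    obtain ⟨hz1, hz2⟩ := hz
    refine ⟨?_, hz2⟩
    rw [mem_dCube]
    intro i
    exact eVal_mem hz1
  · intro z1 hz1 z2 hz2 h
    rw [Finset.mem_filter] at hz1 hz2
    have : eVal n z1 = eVal n z2 := congrFun h 0
    rw [← dec_eVal hz1.1, ← dec_eVal hz2.1, this]
  · intro y hy
    rw [Finset.mem_filter, mem_dCube] at hy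
    obtain ⟨hy1, hy2⟩ := hy
    have h0 := hy1 0
    refine ⟨dec n d (y 0), ?_, ?_⟩
    · rw [Finset.mem_filter]
      refine ⟨dec_mem h0.1 h0.2 hn, ?_⟩
      rwa [eVal_dec h0.1 h0.2 hn]
    · funext i
      rw [eVal_dec h0.1 h0.2 hn]
      congr 1
      exact Subsingleton.elim _ _

/-- which coordinate a small-cut index refers to -/
def coordOf {m : ℕ} (u : Fin (2 * (m + 1) - 1)) : Fin (m + 1) :=
  if h : (u : ℕ) < m + 1 then ⟨u, h⟩
  else ⟨(u : ℕ) - (m + 1) + 1, by have := u.isLt; omega⟩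

/-- the `2d-1` hyperplane cuts realizing the lexicographic cut just after point `a` -/
def cutC {m : ℕ} (a : Fin (m + 1) → ℕ) (u : Fin (2 * (m + 1) - 1)) : Fin (m + 1) × ℕ :=
  if (u : ℕ) < m + 1 then (coordOf u, a (coordOf u)) else (coordOf u, a (coordOf u) - 1)

lemma cutC_low {m : ℕ} (a : Fin (m + 1) → ℕ) (i : Fin (m + 1))
    (h : (i : ℕ) < 2 * (m + 1) - 1) :
    cutC a ⟨(i : ℕ), h⟩ = (i, a i) := by
  have hc : coordOf (⟨(i : ℕ), h⟩ : Fin (2 * (m + 1) - 1)) = i := by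
    rw [coordOf, dif_pos (show ((⟨(i : ℕ), h⟩ : Fin (2 * (m + 1) - 1)) : ℕ) < m + 1 from i.isLt)]
  rw [cutC, if_pos (show ((⟨(i : ℕ), h⟩ : Fin (2 * (m + 1) - 1)) : ℕ) < m + 1 from i.isLt), hc]

lemma cutC_high {m : ℕ} (a : Fin (m + 1) → ℕ) (i : Fin (m + 1)) (hi : 1 ≤ (i : ℕ))
    (h : (i : ℕ) + m < 2 * (m + 1) - 1) :
    cutC a ⟨(i : ℕ) + m, h⟩ = (i, a i - 1) := by
  have hlt : ¬ ((⟨(i : ℕ) + m, h⟩ : Fin (2 * (m + 1) - 1)) : ℕ) < m + 1 := by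
    show ¬ (i : ℕ) + m < m + 1; omega
  have hc : coordOf (⟨(i : ℕ) + m, h⟩ : Fin (2 * (m + 1) - 1)) = i := by
    rw [coordOf, dif_neg hlt]
    apply Fin.ext
    show (i : ℕ) + m - (m + 1) + 1 = (i : ℕ)
    omega
  rw [cutC, if_neg hlt, hc]

/-- clamping a point into the cube -/
def clampF (n : ℕ) {d : ℕ} (z : Fin d → ℕ) : Fin d → ℕ := fun i => min (max (z i) 1) n

lemma clampF_mem {d n : ℕ} (hn : 1 ≤ n) (z : Fin d → ℕ) : clampF n z ∈ dCube d n := by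
  rw [mem_dCube]; intro i; unfold clampF; omega

lemma clampF_eq {d n : ℕ} {z : Fin d → ℕ} (hz : z ∈ dCube d n) : clampF n z = z := by
  funext i; have := mem_dCube.mp hz i; unfold clampF; omega

end Stmt10Aux

/-- Assuming Alon's 1-dimensional necklace splitting theorem, every `k`-colored discrete
`d`-dimensional necklace (each color class of size divisible by `q`) has a fair
`q`-splitting using at most `(2d-1)·k·(q-1)` axis-aligned hyperplane cuts. -/
theorem stmt10
    (alon : ∀ (n k q : ℕ), 1 ≤ k → 2 ≤ q →
      ∀ color : (Fin 1 → ℕ) → Fin k,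
        (∀ j : Fin k, q ∣ ((dCube 1 n).filter fun z => color z = j).card) →
        HasFairSplit 1 n k q (k * (q - 1)) color) :
    ∀ (d n k q : ℕ), 1 ≤ d → 1 ≤ k → 2 ≤ q →
      ∀ color : (Fin d → ℕ) → Fin k,
        (∀ j : Fin k, q ∣ ((dCube d n).filter fun z => color z = j).card) →
        HasFairSplit d n k q ((2 * d - 1) * k * (q - 1)) color := by
  intro d n k q hd hk hq color hdvd
  rcases Nat.eq_zero_or_pos n with hn | hn
  · -- empty cube: trivial splitting
    subst hn
    have hempty : dCube d 0 = ∅ := by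
      ext z
      simp only [Stmt10Aux.mem_dCube, Finset.notMem_empty, iff_false, not_forall]
      exact ⟨⟨0, hd⟩, by omega⟩
    exact ⟨fun _ => (⟨0, hd⟩, 0), fun _ => ⟨0, by omega⟩, fun z w _ => rfl,
      fun j l => by simp [hempty]⟩
  obtain ⟨m, rfl⟩ : ∃ m, d = m + 1 := ⟨d - 1, by omega⟩
  set N := n ^ (m + 1) with hN
  have hN1 : 1 ≤ N := Nat.one_le_pow _ _ hn
  set color1 : (Fin 1 → ℕ) → Fin k :=
    fun y => color (Stmt10Aux.dec n (m + 1) (y 0)) with hcolor1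
  have hcard : ∀ j : Fin k,
      ((dCube 1 N).filter fun y => color1 y = j).card
        = ((dCube (m + 1) n).filter fun z => color z = j).card := by
    intro j
    have h1 : ((dCube (m + 1) n).filter fun z =>
          color1 (fun _ => Stmt10Aux.eVal n z) = j).card
        = ((dCube 1 N).filter fun y => color1 (fun _ => y 0) = j).card :=
      Stmt10Aux.card_transfer (m + 1) n (fun c => color1 (fun _ => c) = j) hn
    have h2 : ((dCube 1 N).filter fun y => color1 (fun _ => y 0) = j)
        = ((dCube 1 N).filter fun y => color1 y = j) := by
      apply Finset.filter_congr
      intro y _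
      have hy : (fun _ : Fin 1 => y 0) = y := funext fun i => by
        rw [Subsingleton.elim i 0]
      rw [hy]
    have h3 : ((dCube (m + 1) n).filter fun z =>
          color1 (fun _ => Stmt10Aux.eVal n z) = j)
        = ((dCube (m + 1) n).filter fun z => color z = j) := by
      apply Finset.filter_congr
      intro z hz
      show color (Stmt10Aux.dec n (m + 1) (Stmt10Aux.eVal n z)) = j ↔ color z = j
      rw [Stmt10Aux.dec_eVal hz]
    rw [← h2, ← h1, h3]
  have hdvd1 : ∀ j : Fin k, q ∣ ((dCube 1 N).filter fun y => color1 y = j).card := by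
    intro j; rw [hcard j]; exact hdvd j
  obtain ⟨cut1, part1, hinv1, hfair1⟩ := alon N k q hk hq color1 hdvd1
  set a : Fin (k * (q - 1)) → Fin (m + 1) → ℕ :=
    fun s => Stmt10Aux.dec n (m + 1) (min (max (cut1 s).2 1) N) with ha_def
  have hamem : ∀ s, a s ∈ dCube (m + 1) n := by
    intro s; rw [ha_def]; exact Stmt10Aux.dec_mem (by omega) (by omega) hn
  have haE : ∀ s, Stmt10Aux.eVal n (a s) = min (max (cut1 s).2 1) N := by
    intro s; rw [ha_def]; exact Stmt10Aux.eVal_dec (by omega) (by omega) hn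
  have hab : ∀ s i, 1 ≤ a s i ∧ a s i ≤ n :=
    fun s i => Stmt10Aux.mem_dCube.mp (hamem s) i
  have heq : (2 * (m + 1) - 1) * k * (q - 1) = (k * (q - 1)) * (2 * (m + 1) - 1) := by
    rw [Nat.mul_assoc, Nat.mul_comm]
  refine ⟨fun r => Stmt10Aux.cutC (a (finProdFinEquiv.symm (Fin.cast heq r)).1)
      (finProdFinEquiv.symm (Fin.cast heq r)).2,
    fun z => part1 (fun _ => Stmt10Aux.eVal n (Stmt10Aux.clampF n z)), ?_, ?_⟩
  · -- invariance
    intro z w hzw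
    have hCzw : ∀ s u,
        (z (Stmt10Aux.cutC (a s) u).1 ≤ (Stmt10Aux.cutC (a s) u).2 ↔
          w (Stmt10Aux.cutC (a s) u).1 ≤ (Stmt10Aux.cutC (a s) u).2) := by
      intro s u
      have h := hzw (Fin.cast heq.symm (finProdFinEquiv (s, u)))
      have h2 : Fin.cast heq (Fin.cast heq.symm (finProdFinEquiv (s, u)))
          = finProdFinEquiv (s, u) := Fin.ext rfl
      simp only [h2, Equiv.symm_apply_apply] at h
      exact h
    have hA : ∀ s (i : Fin (m + 1)), (z i ≤ a s i ↔ w i ≤ a s i) := by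
      intro s i
      have h := hCzw s ⟨(i : ℕ), by have := i.isLt; omega⟩
      rw [Stmt10Aux.cutC_low] at h
      exact h
    have hB : ∀ s (i : Fin (m + 1)), 1 ≤ (i : ℕ) →
        (z i ≤ a s i - 1 ↔ w i ≤ a s i - 1) := by
      intro s i hi
      have h := hCzw s ⟨(i : ℕ) + m, by have := i.isLt; omega⟩
      rw [Stmt10Aux.cutC_high (a s) i hi] at h
      exact h
    set cz := Stmt10Aux.clampF n z with hcz
    set cw := Stmt10Aux.clampF n w with hcw
    have hczm : cz ∈ dCube (m + 1) n := Stmt10Aux.clampF_mem hn z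
    have hcwm : cw ∈ dCube (m + 1) n := Stmt10Aux.clampF_mem hn w
    have hkey : ∀ s, (Stmt10Aux.eVal n cz ≤ Stmt10Aux.eVal n (a s) ↔
        Stmt10Aux.eVal n cw ≤ Stmt10Aux.eVal n (a s)) := by
      intro s
      have hd1 : ∀ i : Fin (m + 1), cz i - 1 < n :=
        fun i => by have := Stmt10Aux.mem_dCube.mp hczm i; omega
      have hd2 : ∀ i : Fin (m + 1), cw i - 1 < n :=
        fun i => by have := Stmt10Aux.mem_dCube.mp hcwm i; omega
      have hd3 : ∀ i : Fin (m + 1), a s i - 1 < n :=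
        fun i => by have := hab s i; omega
      have h0' : (cz 0 - 1 ≤ a s 0 - 1 ↔ cw 0 - 1 ≤ a s 0 - 1) := by
        have h1 := hA s 0
        have h2 := hab s 0
        have e1 : cz 0 = min (max (z 0) 1) n := rfl
        have e2 : cw 0 = min (max (w 0) 1) n := rfl
        omega
      have hrest : ∀ i : Fin m,
          (cz i.succ - 1 ≤ a s i.succ - 1 ↔ cw i.succ - 1 ≤ a s i.succ - 1) ∧
          (a s i.succ - 1 ≤ cz i.succ - 1 ↔ a s i.succ - 1 ≤ cw i.succ - 1) := by
        intro i
        have h1 := hA s i.succ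
        have h2 := hB s i.succ (by rw [Fin.val_succ]; omega)
        have h3 := hab s i.succ
        have e1 : cz i.succ = min (max (z i.succ) 1) n := rfl
        have e2 : cw i.succ = min (max (w i.succ) 1) n := rfl
        omega
      have hmain := Stmt10Aux.detB m n (fun i => a s i - 1) (fun i => cz i - 1)
        (fun i => cw i - 1) hd1 hd2 hd3 h0' hrest
      simp only [Stmt10Aux.eVal]
      omega
    have h1d : ∀ s1, ((fun _ : Fin 1 => Stmt10Aux.eVal n cz) (cut1 s1).1 ≤ (cut1 s1).2 ↔
        (fun _ : Fin 1 => Stmt10Aux.eVal n cw) (cut1 s1).1 ≤ (cut1 s1).2) := by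
      intro s1
      have h := hkey s1
      rw [haE s1] at h
      have b1 := Stmt10Aux.eVal_mem hczm
      have b2 := Stmt10Aux.eVal_mem hcwm
      show Stmt10Aux.eVal n cz ≤ (cut1 s1).2 ↔ Stmt10Aux.eVal n cw ≤ (cut1 s1).2
      omega
    exact hinv1 _ _ h1d
  · -- fairness
    intro j l
    show q * ((dCube (m + 1) n).filter fun z => color z = j ∧
        part1 (fun _ => Stmt10Aux.eVal n (Stmt10Aux.clampF n z)) = l).card
      = ((dCube (m + 1) n).filter fun z => color z = j).card
    have hstep1 : ((dCube (m + 1) n).filter fun z =>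
        color z = j ∧ part1 (fun _ => Stmt10Aux.eVal n (Stmt10Aux.clampF n z)) = l)
        = ((dCube (m + 1) n).filter fun z =>
            color1 (fun _ => Stmt10Aux.eVal n z) = j ∧
            part1 (fun _ => Stmt10Aux.eVal n z) = l) := by
      apply Finset.filter_congr
      intro z hz
      rw [Stmt10Aux.clampF_eq hz]
      have hcc : color1 (fun _ => Stmt10Aux.eVal n z) = color z := by
        show color (Stmt10Aux.dec n (m + 1) (Stmt10Aux.eVal n z)) = color z
        rw [Stmt10Aux.dec_eVal hz]
      rw [hcc]
    have h1' : ((dCube (m + 1) n).filter fun z =>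
            color1 (fun _ => Stmt10Aux.eVal n z) = j ∧
            part1 (fun _ => Stmt10Aux.eVal n z) = l).card
        = ((dCube 1 N).filter fun y =>
            color1 (fun _ => y 0) = j ∧ part1 (fun _ => y 0) = l).card :=
      Stmt10Aux.card_transfer (m + 1) n
        (fun c => color1 (fun _ => c) = j ∧ part1 (fun _ => c) = l) hn
    have h2 : ((dCube 1 N).filter fun y =>
            color1 (fun _ => y 0) = j ∧ part1 (fun _ => y 0) = l)
        = ((dCube 1 N).filter fun y => color1 y = j ∧ part1 y = l) := by
      apply Finset.filter_congr
      intro y _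
      have hy : (fun _ : Fin 1 => y 0) = y := funext fun i => by
        rw [Subsingleton.elim i 0]
      rw [hy]
    rw [hstep1, h1', h2, hfair1 j l, hcard j]
end

section
/- In dimension 1, the volume equations for a fair q-splitting are linearly independent: let 0 = β_0 ≤ β_1 ≤ ... ≤ β_t ≤ β_{t+1} = α be a division of [0, α] and let ℓ : {0,...,t} → {1,...,q} be a labeling of the t+1 subintervals such that every label is used. If all q parts have equal total length, then the q−1 equations Σ_{ℓ(i)=l}(β_{i+1} − β_i) = Σ_{ℓ(i)=1}(β_{i+1} − β_i) for l = 2,...,q are linearly independent as linear forms in the variables α, β_1, ..., β_t over ℚ. Consequently, the transcendence degree over ℚ of {α, β_1, ..., β_t} is at most t + 2 − q whenever these equations hold with each part nonempty. -/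
/-- The coefficient vector, in the variables `β 1, …, β t, α` (indexed by `Fin (t+1)`,
with the last index corresponding to `α`), of the linear form giving the total length
`∑_{lab i = l} (β (i+1) - β i)` of the part labeled `l` of a division
`0 = β 0 ≤ β 1 ≤ … ≤ β t ≤ β (t+1) = α` of `[0, α]`. -/
def coeffVec (t q : ℕ) (lab : Fin (t + 1) → Fin q) (l : Fin q) : Fin (t + 1) → ℚ :=
  fun m =>
    (if lab m = l then 1 else 0) -
      if h : (m : ℕ) < t then
        (if lab ⟨(m : ℕ) + 1, by omega⟩ = l then 1 else 0) else 0



lemma coeff_key (t q : ℕ) (lab : Fin (t + 1) → Fin q) (l : Fin q) (i : Fin (t + 1)) :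
    ∑ m : Fin (t + 1), (if (i : ℕ) ≤ (m : ℕ) then coeffVec t q lab l m else 0)
      = if lab i = l then 1 else 0 := by
  set G : ℕ → ℚ := fun m => if h : m < t + 1 then (if lab ⟨m, h⟩ = l then 1 else 0) else 0
    with hG
  have hcv : ∀ m : Fin (t + 1), coeffVec t q lab l m = G m - G (m + 1) := by
    intro m
    simp only [coeffVec, hG]
    rw [dif_pos m.isLt]
    by_cases h : (m : ℕ) < t
    · rw [dif_pos h, dif_pos (by omega)]
    · rw [dif_neg h, dif_neg (by omega : ¬ (m : ℕ) + 1 < t + 1)]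
  have hconv : ∑ m : Fin (t + 1), (if (i : ℕ) ≤ (m : ℕ) then coeffVec t q lab l m else 0)
      = ∑ m ∈ Finset.range (t + 1), (if (i : ℕ) ≤ m then G m - G (m + 1) else 0) := by
    rw [← Fin.sum_univ_eq_sum_range (fun m => if (i : ℕ) ≤ m then G m - G (m + 1) else 0)]
    refine Finset.sum_congr rfl fun m _ => ?_
    rw [hcv m]
  rw [hconv]
  have hsplit : Finset.range (t + 1) = Finset.Ico 0 (i : ℕ) ∪ Finset.Ico (i : ℕ) (t + 1) := by
    rw [Finset.Ico_union_Ico_eq_Ico (Nat.zero_le _) (le_of_lt i.isLt), Finset.range_eq_Ico]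
  rw [hsplit, Finset.sum_union (by
    apply Finset.Ico_disjoint_Ico_consecutive)]
  have h1 : ∑ m ∈ Finset.Ico 0 (i : ℕ), (if (i : ℕ) ≤ m then G m - G (m + 1) else 0) = 0 := by
    refine Finset.sum_eq_zero fun m hm => ?_
    rw [Finset.mem_Ico] at hm
    rw [if_neg (by omega)]
  have h2 : ∑ m ∈ Finset.Ico (i : ℕ) (t + 1), (if (i : ℕ) ≤ m then G m - G (m + 1) else 0)
      = ∑ m ∈ Finset.Ico (i : ℕ) (t + 1), (G m - G (m + 1)) := by
    refine Finset.sum_congr rfl fun m hm => ?_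
    rw [Finset.mem_Ico] at hm
    rw [if_pos hm.1]
  rw [h1, h2, zero_add, Finset.sum_Ico_eq_sub _ (le_of_lt i.isLt),
    Finset.sum_range_sub' G, Finset.sum_range_sub' G]
  have hGt : G (t + 1) = 0 := by rw [hG]; simp
  have hGi : G (i : ℕ) = if lab i = l then 1 else 0 := by
    rw [hG]; simp only [i.isLt, dif_pos, Fin.eta]
  rw [hGt, hGi]
  ring

lemma phi_coeff (t q : ℕ) (lab : Fin (t + 1) → Fin q) (l : Fin q)
    (β : Fin (t + 2) → ℝ) (hβ0 : β 0 = 0) :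
    ∑ m : Fin (t + 1), (coeffVec t q lab l m : ℝ) • β m.succ
      = ∑ i : Fin (t + 1), if lab i = l then β i.succ - β i.castSucc else 0 := by
  set f : ℕ → ℝ := fun i => if h : i < t + 1 then (if lab ⟨i, h⟩ = l then 1 else 0) else 0
    with hf
  set B : ℕ → ℝ := fun i => if h : i < t + 2 then β ⟨i, h⟩ else 0 with hB
  have hcv : ∀ m : Fin (t + 1), ((coeffVec t q lab l m : ℚ) : ℝ) = f m - f (m + 1) := by
    intro m
    simp only [coeffVec, hf]
    rw [dif_pos m.isLt]
    by_cases h : (m : ℕ) < t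
    · rw [dif_pos h, dif_pos (by omega)]
      push_cast
      split_ifs <;> norm_num
    · rw [dif_neg h, dif_neg (by omega : ¬ (m : ℕ) + 1 < t + 1)]
      push_cast
      split_ifs <;> norm_num
  have hsucc : ∀ m : Fin (t + 1), β m.succ = B ((m : ℕ) + 1) := by
    intro m
    simp only [hB]
    have := m.isLt
    rw [dif_pos (by omega)]
    congr 1
  have hcast : ∀ m : Fin (t + 1), β m.castSucc = B (m : ℕ) := by
    intro m
    simp only [hB]
    have := m.isLt
    rw [dif_pos (by omega)]
    congr 1
  have hLHS : ∑ m : Fin (t + 1), (coeffVec t q lab l m : ℝ) • β m.succ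
      = ∑ m ∈ Finset.range (t + 1), (f m - f (m + 1)) * B (m + 1) := by
    rw [← Fin.sum_univ_eq_sum_range (fun m => (f m - f (m + 1)) * B (m + 1))]
    refine Finset.sum_congr rfl fun m _ => ?_
    rw [smul_eq_mul, hcv m, hsucc m]
  have hRHS : ∑ i : Fin (t + 1), (if lab i = l then β i.succ - β i.castSucc else 0)
      = ∑ m ∈ Finset.range (t + 1), f m * (B (m + 1) - B m) := by
    rw [← Fin.sum_univ_eq_sum_range (fun m => f m * (B (m + 1) - B m))]
    refine Finset.sum_congr rfl fun m _ => ?_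
    rw [hsucc m, hcast m, hf]
    simp only [dif_pos m.isLt, Fin.eta]
    split_ifs <;> ring
  rw [hLHS, hRHS]
  have key : ∑ m ∈ Finset.range (t + 1), f (m + 1) * B (m + 1)
      = ∑ m ∈ Finset.range (t + 1), f m * B m := by
    have h1 := Finset.sum_range_succ' (fun m => f m * B m) (t + 1)
    have h2 := Finset.sum_range_succ (fun m => f m * B m) (t + 1)
    have hft : f (t + 1) = 0 := by rw [hf]; simp
    have hB0 : B 0 = 0 := by
      simp only [hB]
      rw [dif_pos (by omega : (0:ℕ) < t + 2)]
      convert hβ0 using 2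
      simp [Fin.ext_iff]
    rw [h2, hft, zero_mul, add_zero] at h1
    rw [h1, hB0, mul_zero, add_zero]
  rw [Finset.sum_congr rfl (fun m _ => sub_mul (f m) (f (m + 1)) (B (m + 1))),
    Finset.sum_sub_distrib, key,
    Finset.sum_congr rfl (fun m _ => mul_sub (f m) (B (m + 1)) (B m)),
    Finset.sum_sub_distrib]

/-- In dimension 1 the volume equations of a fair `q`-splitting are linearly
independent: if every label is used, the `q - 1` linear forms (part `l` minus part `1`)
in the variables `α, β 1, …, β t` are linearly independent over `ℚ`; consequently, if
the equal-length equations hold for a strictly increasing division starting at `0`, the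
transcendence degree over `ℚ` of `{α, β 1, …, β t}` is at most `t + 2 - q`, i.e. no
`t + 3 - q` of these reals are algebraically independent over `ℚ`. -/
theorem stmt15 (t q : ℕ) (ht : 1 ≤ t) (hq : 2 ≤ q)
    (lab : Fin (t + 1) → Fin q) (hsurj : Function.Surjective lab) :
    LinearIndependent ℚ
      (fun l : Fin (q - 1) =>
        coeffVec t q lab ⟨(l : ℕ) + 1, by have := l.isLt; omega⟩ -
          coeffVec t q lab ⟨0, by omega⟩) ∧
    ∀ β : Fin (t + 2) → ℝ, StrictMono β → β 0 = 0 →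
      (∀ l l' : Fin q,
        (∑ i : Fin (t + 1), if lab i = l then β i.succ - β i.castSucc else 0) =
          ∑ i : Fin (t + 1), if lab i = l' then β i.succ - β i.castSucc else 0) →
      ∀ g : Fin (t + 3 - q) → Fin (t + 1), Function.Injective g →
        ¬AlgebraicIndependent ℚ fun i => β (g i).succ := by
  set v : Fin (q - 1) → Fin (t + 1) → ℚ :=
    fun l => coeffVec t q lab ⟨(l : ℕ) + 1, by have := l.isLt; omega⟩ -
      coeffVec t q lab ⟨0, by omega⟩ with hv
  have hLI : LinearIndependent ℚ v := by
    rw [Fintype.linearIndependent_iff]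
    intro c hc l0
    obtain ⟨i, hi⟩ := hsurj ⟨(l0 : ℕ) + 1, by have := l0.isLt; omega⟩
    -- evaluate functional ∑_{m ≥ i}
    have hzero : ∀ m : Fin (t + 1), ∑ l, c l * v l m = 0 := by
      intro m
      have := congrFun hc m
      simpa [Finset.sum_apply] using this
    have hmain : ∑ l, c l *
        ((if lab i = ⟨(l : ℕ) + 1, by have := l.isLt; omega⟩ then (1:ℚ) else 0) -
          (if lab i = ⟨0, by omega⟩ then (1:ℚ) else 0)) = 0 := by
      have step1 : ∀ l : Fin (q - 1), c l *
          ((if lab i = ⟨(l : ℕ) + 1, by have := l.isLt; omega⟩ then (1:ℚ) else 0) -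
            (if lab i = ⟨0, by omega⟩ then (1:ℚ) else 0))
          = ∑ m : Fin (t + 1), (if (i : ℕ) ≤ (m : ℕ) then c l * v l m else 0) := by
        intro l
        rw [← coeff_key t q lab ⟨(l : ℕ) + 1, by have := l.isLt; omega⟩ i,
          ← coeff_key t q lab ⟨0, by omega⟩ i, ← Finset.sum_sub_distrib, Finset.mul_sum]
        refine Finset.sum_congr rfl fun m _ => ?_
        split_ifs with h
        · simp only [hv, Pi.sub_apply]
        · ring
      calc ∑ l, c l *
          ((if lab i = ⟨(l : ℕ) + 1, by have := l.isLt; omega⟩ then (1:ℚ) else 0) -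
            (if lab i = ⟨0, by omega⟩ then (1:ℚ) else 0))
          = ∑ l, ∑ m : Fin (t + 1), (if (i : ℕ) ≤ (m : ℕ) then c l * v l m else 0) :=
            Finset.sum_congr rfl fun l _ => step1 l
        _ = ∑ m : Fin (t + 1), ∑ l, (if (i : ℕ) ≤ (m : ℕ) then c l * v l m else 0) :=
            Finset.sum_comm
        _ = ∑ m : Fin (t + 1), (if (i : ℕ) ≤ (m : ℕ) then ∑ l, c l * v l m else 0) := by
            refine Finset.sum_congr rfl fun m _ => ?_
            split_ifs <;> simp
        _ = 0 := by
            refine Finset.sum_eq_zero fun m _ => ?_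
            rw [hzero m]
            split_ifs <;> rfl
    have hne : lab i ≠ ⟨0, by omega⟩ := by
      rw [hi]
      simp [Fin.ext_iff]
    have hterm : ∀ l : Fin (q - 1), c l *
        ((if lab i = ⟨(l : ℕ) + 1, by have := l.isLt; omega⟩ then (1:ℚ) else 0) -
          (if lab i = ⟨0, by omega⟩ then (1:ℚ) else 0))
        = if l0 = l then c l else 0 := by
      intro l
      rw [if_neg hne, sub_zero, hi]
      by_cases h : l0 = l
      · subst h
        rw [if_pos rfl, if_pos rfl, mul_one]
      · rw [if_neg h, if_neg ?_, mul_zero]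
        simp only [Fin.mk.injEq]
        intro hcon
        exact h (Fin.ext (by omega))
    rw [Finset.sum_congr rfl (fun l _ => hterm l)] at hmain
    simpa using hmain
  refine ⟨hLI, ?_⟩
  intro β hmono hβ0 heq g hg hAI
  classical
  set x : Fin (t + 1) → ℝ := fun m => β m.succ with hx
  set φ : (Fin (t + 1) → ℚ) →ₗ[ℚ] ℝ := Fintype.linearCombination ℚ x with hφ
  have hφapp : ∀ w : Fin (t + 1) → ℚ, φ w = ∑ m, (w m : ℝ) • x m := by
    intro w
    rw [hφ, Fintype.linearCombination_apply]
    refine Finset.sum_congr rfl fun m _ => ?_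
    rw [Rat.smul_def, smul_eq_mul]
  have hφv : ∀ l : Fin (q - 1), φ (v l) = 0 := by
    intro l
    rw [hφapp]
    have : ∑ m, ((v l) m : ℝ) • x m
        = (∑ m, (coeffVec t q lab ⟨(l : ℕ) + 1, by have := l.isLt; omega⟩ m : ℝ) • x m)
          - ∑ m, (coeffVec t q lab ⟨0, by omega⟩ m : ℝ) • x m := by
      rw [← Finset.sum_sub_distrib]
      refine Finset.sum_congr rfl fun m _ => ?_
      simp only [hv, Pi.sub_apply]
      rw [Rat.cast_sub, sub_smul]
    rw [this, hx]
    rw [phi_coeff t q lab _ β hβ0, phi_coeff t q lab _ β hβ0]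
    rw [heq ⟨(l : ℕ) + 1, by have := l.isLt; omega⟩ ⟨0, by omega⟩, sub_self]
  set R : Submodule ℚ (Fin (t + 1) → ℚ) := Submodule.span ℚ (Set.range v) with hR
  have hRker : R ≤ LinearMap.ker φ := by
    rw [hR, Submodule.span_le]
    rintro w ⟨l, rfl⟩
    exact hφv l
  have hfinR : Module.finrank ℚ R = q - 1 := by
    rw [hR, finrank_span_eq_card hLI, Fintype.card_fin]
  have hfinQ : Module.finrank ℚ ((Fin (t + 1) → ℚ) ⧸ R) = t + 2 - q := by
    have h := R.finrank_quotient_add_finrank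
    rw [hfinR, Module.finrank_pi, Fintype.card_fin] at h
    omega
  have hcard : q ≤ t + 1 := by
    have := Fintype.card_le_of_surjective lab hsurj
    simpa using this
  have hnli : ¬ LinearIndependent ℚ
      (fun i : Fin (t + 3 - q) => R.mkQ ((Pi.single (g i) (1 : ℚ) : Fin (t + 1) → ℚ))) := by
    intro h
    have hle := h.fintype_card_le_finrank
    rw [hfinQ, Fintype.card_fin] at hle
    omega
  rw [Fintype.not_linearIndependent_iff] at hnli
  obtain ⟨c, hsum, i0, hi0⟩ := hnli
  have hw : (∑ i, c i • (Pi.single (g i) (1 : ℚ) : Fin (t + 1) → ℚ)) ∈ R := by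
    have hmk : R.mkQ (∑ i, c i • (Pi.single (g i) (1 : ℚ) : Fin (t + 1) → ℚ)) = 0 := by
      rw [map_sum]
      simpa [map_smul] using hsum
    rwa [← LinearMap.mem_ker, Submodule.ker_mkQ] at hmk
  have hφw : φ (∑ i, c i • (Pi.single (g i) (1 : ℚ) : Fin (t + 1) → ℚ)) = 0 := hRker hw
  rw [map_sum] at hφw
  have hφs : ∀ i, φ (c i • (Pi.single (g i) (1 : ℚ) : Fin (t + 1) → ℚ)) = c i • x (g i) := by
    intro i
    rw [map_smul, hφ, Fintype.linearCombination_apply_single, one_smul]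
  rw [Finset.sum_congr rfl (fun i _ => hφs i)] at hφw
  have hLIx := hAI.linearIndependent
  exact hi0 (Fintype.linearIndependent_iff.mp hLIx c hφw i0)
end

section
/- Theorem (tightness of one-interval coloring): For every t ≥ 1 there is a measurable (t+1)-coloring of [0,1] admitting no fair 2-splitting using at most t cuts; namely, if [0,1] is divided into t+1 consecutive intervals I_1,...,I_{t+1} colored with distinct colors 1,...,t+1, and the lengths of I_1,...,I_t are algebraically independent over ℚ (so each color class is a single interval), then any fair 2-splitting requires at least t+1 cuts. -/
open MeasureTheory

/-- Tightness of the one-necklace coloring: divide `[0,1]` into `t+1` consecutive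
nontrivial intervals with breakpoints `c 0 = 0 < c 1 < … < c (t+1) = 1`, the lengths of
the first `t` of them algebraically independent over `ℚ`, and color interval `j` with
color `j`. Then there is no fair `2`-splitting using at most `t` cuts: for any cut
points `β` and any measurable labeling `part` of `ℝ` into two parts constant on the
pieces determined by the cuts, some color class is not split in half. -/
theorem stmt19 (t : ℕ) (ht : 1 ≤ t) (c : Fin (t + 2) → ℝ)
    (hmono : StrictMono c) (h0 : c 0 = 0) (h1 : c (Fin.last (t + 1)) = 1)
    (hind : AlgebraicIndependent ℚ
      fun j : Fin t => c j.succ.castSucc - c j.castSucc.castSucc)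
    (β : Fin t → ℝ) (part : ℝ → Fin 2) (hpart : Measurable part)
    (hconst : ∀ x y : ℝ, (∀ s, x ≤ β s ↔ y ≤ β s) → part x = part y) :
    ¬∀ j : Fin (t + 1),
        2 * volume (Set.Icc (c j.castSucc) (c j.succ) ∩ part ⁻¹' {0}) =
          volume (Set.Icc (c j.castSucc) (c j.succ)) := by
  intro h
  -- every color interval's interior must contain a cut
  have key : ∀ j : Fin (t + 1), ∃ s : Fin t,
      β s ∈ Set.Ioo (c j.castSucc) (c j.succ) := by
    intro j
    by_contra hno
    push_neg at hno
    set a := c j.castSucc with ha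
    set b := c j.succ with hb
    have hab : a < b := hmono (Fin.castSucc_lt_succ : j.castSucc < j.succ)
    have hm : (a + b) / 2 ∈ Set.Ioo a b := ⟨by linarith, by linarith⟩
    have hconst' : ∀ x ∈ Set.Ioo a b, part x = part ((a + b) / 2) := by
      intro x hx
      apply hconst
      intro s
      have hs := hno s
      rcases lt_or_ge a (β s) with h1' | h1'
      · have h2' : b ≤ β s := by
          by_contra h2'
          exact hs ⟨h1', lt_of_not_ge h2'⟩
        constructor
        · intro _; exact le_trans hm.2.le h2'
        · intro _; exact le_trans hx.2.le h2'
      · constructor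
        · intro hle; exact absurd (lt_of_le_of_lt h1' hx.1) (not_lt.mpr hle)
        · intro hle; exact absurd (lt_of_le_of_lt h1' hm.1) (not_lt.mpr hle)
    have hvol : volume (Set.Icc a b) = ENNReal.ofReal (b - a) := Real.volume_Icc
    have hvolpos : volume (Set.Icc a b) ≠ 0 := by
      rw [hvol]
      simp only [ne_eq, ENNReal.ofReal_eq_zero, not_le]
      linarith
    have hj := h j
    rw [← ha, ← hb] at hj
    rcases Fin.exists_fin_two.mp ⟨part ((a + b) / 2), rfl⟩ with h2 | h2
    · -- whole open interval in part 0
      have hsub : Set.Ioo a b ⊆ Set.Icc a b ∩ part ⁻¹' {0} := by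
        intro x hx
        refine ⟨⟨hx.1.le, hx.2.le⟩, ?_⟩
        simp only [Set.mem_preimage, Set.mem_singleton_iff]
        rw [hconst' x hx, h2]
      have hle : volume (Set.Ioo a b) ≤ volume (Set.Icc a b ∩ part ⁻¹' {0}) :=
        measure_mono hsub
      have hIoo : volume (Set.Ioo a b) = volume (Set.Icc a b) := by
        rw [Real.volume_Ioo, hvol]
      have hge : volume (Set.Icc a b ∩ part ⁻¹' {0}) ≤ volume (Set.Icc a b) :=
        measure_mono Set.inter_subset_left
      have heq : volume (Set.Icc a b ∩ part ⁻¹' {0}) = volume (Set.Icc a b) :=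
        le_antisymm hge (hIoo ▸ hle)
      rw [heq, hvol] at hj
      have hjt := congrArg ENNReal.toReal hj
      rw [ENNReal.toReal_mul, ENNReal.toReal_ofReal (by linarith)] at hjt
      simp only [ENNReal.toReal_ofNat] at hjt
      linarith
    · -- part-0 points of the interval are among the endpoints
      have hsub : Set.Icc a b ∩ part ⁻¹' {0} ⊆ {a, b} := by
        rintro x ⟨hx1, hx2⟩
        by_contra hx
        simp only [Set.mem_insert_iff, Set.mem_singleton_iff, not_or] at hx
        have hxIoo : x ∈ Set.Ioo a b :=
          ⟨lt_of_le_of_ne hx1.1 (Ne.symm hx.1), lt_of_le_of_ne hx1.2 hx.2⟩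
        have hc := hconst' x hxIoo
        rw [Set.mem_preimage, Set.mem_singleton_iff] at hx2
        rw [hx2, h2] at hc
        exact absurd hc (by decide)
      have h0' : volume (Set.Icc a b ∩ part ⁻¹' {0}) = 0 := by
        refine measure_mono_null hsub ?_
        exact (Set.Finite.insert a (Set.finite_singleton b)).measure_zero _
      rw [h0', mul_zero] at hj
      exact hvolpos hj.symm
  choose f hf using key
  have hinj : Function.Injective f := by
    intro j j' hjj'
    by_contra hne
    wlog hlt : j < j' generalizing j j'
    · exact this hjj'.symm (Ne.symm hne) (lt_of_le_of_ne (not_lt.mp hlt) (Ne.symm hne))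
    have hle : c j.succ ≤ c j'.castSucc := by
      apply hmono.monotone
      rw [Fin.le_def]
      simp only [Fin.val_succ, Fin.coe_castSucc]
      exact Fin.lt_def.mp hlt
    have h1' := (hf j).2
    have h2' := (hf j').1
    rw [hjj'] at h1'
    linarith
  have hcard := Fintype.card_le_of_injective f hinj
  simp only [Fintype.card_fin] at hcard
  omega
end
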